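/- Let (a_n) be a sequence of positive integers with lim a_n²/a_{n+1} = 1 and ∑ 1/a_n < ∞. Then there exists N ≥ 0 such that the shifted sequence (a_{N+n})_{n≥1} is the pseudo-greedy expansion of ∑_{n=1}^∞ 1/a_{N+n}, and the gap sequence ε_n = x_n^{−1} + 1 − a_{N+n} of this expansion converges to 0. -/

import Mathlib

/-!
Write `t n = ∑' k, 1 / a (n + k)` for the tails. Since the ratio
`a n / a (n + 1) = (a n ^ 2 / a (n + 1)) / a n` tends to `0`, the tail `t n` is asymptotic to
its first term `1 / a n`, so `c n = a n ^ 2 * t (n + 1)` tends to `1`. From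
`t n = 1 / a n + c n / a n ^ 2` one gets
`(t n)⁻¹ + 1 - a n = (a n * (1 - c n) + c n) / (a n + c n)`, which tends to `0` because
`a n → ∞`. Once this gap is below `1 / 2`, rounding `(t n)⁻¹ + 1` returns the integer `a n`; and the remainder after `n` steps of the
expansion of `t N` is `t (N + n)`.
-/

open Filter Finset Topology

section TopologicalAddGroup

variable {G : Type*} [AddCommGroup G] [TopologicalSpace G] [IsTopologicalAddGroup G]
  {f : ℕ → G}

lemma Summable.nat_add_left (hf : Summable f) (n : ℕ) : Summable fun k => f (n + k) := by
  simpa only [add_comm n] using (summable_nat_add_iff n).2 hf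

variable [T2Space G]

lemma tsum_nat_add_eq_add_tsum_nat_add (hf : Summable f) (n : ℕ) :
    ∑' k, f (n + k) = f n + ∑' k, f (n + 1 + k) := by
  rw [(hf.nat_add_left n).tsum_eq_zero_add]
  simp only [add_zero, add_right_comm n 1, add_assoc]

lemma tsum_sub_sum_range (hf : Summable f) (n : ℕ) :
    (∑' k, f k) - ∑ k ∈ range n, f k = ∑' k, f (n + k) := by
  rw [← hf.sum_add_tsum_nat_add n]
  simp only [add_comm _ n, add_sub_cancel_left]

end TopologicalAddGroup

lemma tsum_nat_add_le_of_ratio_le {f : ℕ → ℝ} (hf : Summable f) {q : ℝ} (hq₀ : 0 ≤ q)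
    (hq₁ : q < 1) {n : ℕ} (h : ∀ m ≥ n, f (m + 1) ≤ q * f m) :
    ∑' k, f (n + k) ≤ f n / (1 - q) := by
  have hgeom : ∀ k, f (n + k) ≤ f n * q ^ k := by
    intro k
    induction k with
    | zero => simp
    | succ k ih =>
      calc f (n + k + 1) ≤ q * f (n + k) := h _ (by omega)
        _ ≤ q * (f n * q ^ k) := by gcongr
        _ = f n * q ^ (k + 1) := by ring
  calc ∑' k, f (n + k) ≤ ∑' k, f n * q ^ k :=
        (hf.nat_add_left n).tsum_le_tsum hgeom
          ((summable_geometric_of_lt_one hq₀ hq₁).mul_left _)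
    _ = f n / (1 - q) := by rw [tsum_mul_left, tsum_geometric_of_lt_one hq₀ hq₁, div_eq_mul_inv]

lemma tendsto_tsum_nat_add_div_self {f : ℕ → ℝ} (hf : Summable f)
    (hpos : ∀ᶠ n in atTop, 0 < f n)
    (hratio : Tendsto (fun n => f (n + 1) / f n) atTop (𝓝 0)) :
    Tendsto (fun n => (∑' k, f (n + k)) / f n) atTop (𝓝 1) := by
  obtain ⟨M, hM⟩ := eventually_atTop.1
    (hpos.and (hratio.eventually (eventually_le_nhds (by norm_num : (0 : ℝ) < 1 / 2))))
  have hbound : ∀ n ≥ M, (∑' k, f (n + k)) / f n ≤ 2 := by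
    intro n hn
    have h := tsum_nat_add_le_of_ratio_le (q := 1 / 2) hf (by norm_num) (by norm_num)
      fun m hm => by
        have := (hM m (hn.trans hm)).2
        rwa [div_le_iff₀ (hM m (hn.trans hm)).1] at this
    rw [div_le_iff₀ (hM n hn).1]
    linarith [show f n / (1 - 1 / 2) = 2 * f n by ring]
  have hsplit : ∀ n ≥ M, (∑' k, f (n + k)) / f n
      = 1 + f (n + 1) / f n * ((∑' k, f (n + 1 + k)) / f (n + 1)) := by
    intro n hn
    have := (hM n hn).1.ne'
    have := (hM (n + 1) (by omega)).1.ne'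
    rw [tsum_nat_add_eq_add_tsum_nat_add hf n]
    field_simp
  have hrest : Tendsto (fun n => f (n + 1) / f n * ((∑' k, f (n + 1 + k)) / f (n + 1)))
      atTop (𝓝 0) := by
    refine hratio.zero_mul_isBoundedUnder_le ⟨2, eventually_map.2 ?_⟩
    filter_upwards [eventually_ge_atTop M] with n hn
    have hnonneg : 0 ≤ ∑' k, f (n + 1 + k) :=
      tsum_nonneg fun k => (hM _ (by omega)).1.le
    rw [Function.comp_apply, Real.norm_of_nonneg (div_nonneg hnonneg (hM _ (by omega)).1.le)]
    exact hbound _ (by omega)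
  have := hrest.const_add 1
  rw [add_zero] at this
  exact this.congr' (eventually_atTop.2 ⟨M, fun n hn => (hsplit n hn).symm⟩)

lemma eventually_pos_of_tendsto_sq_div_succ {a : ℕ → ℝ}
    (hratio : Tendsto (fun n => a n ^ 2 / a (n + 1)) atTop (𝓝 1)) :
    ∀ᶠ n in atTop, 0 < a n := by
  have hsucc : ∀ᶠ n in atTop, 0 < a (n + 1) :=
    (hratio.eventually (lt_mem_nhds one_pos)).mono fun n hn => by
      by_contra! h
      exact hn.not_ge (div_nonpos_of_nonneg_of_nonpos (sq_nonneg _) h)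
  rw [← map_add_atTop_eq_nat 1]
  exact eventually_map.2 hsucc

lemma tendsto_inv_tsum_add_one_sub {a : ℕ → ℝ}
    (hratio : Tendsto (fun n => a n ^ 2 / a (n + 1)) atTop (𝓝 1))
    (hsum : Summable fun n => 1 / a n) :
    Tendsto (fun n => (∑' k, 1 / a (n + k))⁻¹ + 1 - a n) atTop (𝓝 0) := by
  have hpos := eventually_pos_of_tendsto_sq_div_succ hratio
  obtain ⟨M, hM⟩ := eventually_atTop.1 hpos
  have hinv : Tendsto (fun n => 1 / a n) atTop (𝓝 0) := hsum.tendsto_atTop_zero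
  have hquot : Tendsto (fun n => 1 / a (n + 1) / (1 / a n)) atTop (𝓝 0) := by
    have := hratio.mul hinv
    rw [one_mul] at this
    refine this.congr' (eventually_atTop.2 ⟨M, fun n hn => ?_⟩)
    have := (hM n hn).ne'
    field_simp
  have htail := (tendsto_add_atTop_iff_nat 1).2 (tendsto_tsum_nat_add_div_self hsum
    (hpos.mono fun n => one_div_pos.2) hquot)
  set c : ℕ → ℝ := fun n => a n ^ 2 * ∑' k, 1 / a (n + 1 + k) with hc_def
  have hc : Tendsto c atTop (𝓝 1) := by
    have := hratio.mul htail
    rw [one_mul] at this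
    refine this.congr' (eventually_atTop.2 ⟨M, fun n hn => ?_⟩)
    have := (hM (n + 1) (by omega)).ne'
    simp only [hc_def]
    field_simp
  -- `(t n)⁻¹ + 1 - a n = (a n * (1 - c n) + c n) / (a n + c n)`, divided through by `a n`
  have hlim : Tendsto (fun n => (1 - c n + c n * (1 / a n)) / (1 + c n * (1 / a n)))
      atTop (𝓝 ((1 - 1 + 1 * 0) / (1 + 1 * 0))) :=
    ((tendsto_const_nhds.sub hc).add (hc.mul hinv)).div
      (tendsto_const_nhds.add (hc.mul hinv)) (by norm_num)
  rw [show ((1 : ℝ) - 1 + 1 * 0) / (1 + 1 * 0) = 0 by norm_num] at hlim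
  refine hlim.congr' (eventually_atTop.2 ⟨M, fun n hn => ?_⟩)
  have ha := hM n hn
  have ht : 0 ≤ ∑' k, 1 / a (n + 1 + k) :=
    tsum_nonneg fun k => (one_div_pos.2 (hM _ (by omega))).le
  simp only [hc_def]
  rw [tsum_nat_add_eq_add_tsum_nat_add hsum n]
  have : 0 < a n + a n ^ 2 * ∑' k, 1 / a (n + 1 + k) := by positivity
  field_simp
  ring

lemma round_eq_of_abs_sub_lt_half {α : Type*} [Field α] [LinearOrder α] [IsStrictOrderedRing α]
    [FloorRing α] {x : α} {z : ℤ} (h : |x - z| < 1 / 2) : round x = z := by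
  rw [round_eq_iff, Set.mem_Ico]
  constructor <;> linarith [abs_lt.1 h]

theorem eventually_pseudo_greedy_general
    (a : ℕ → ℕ)
    (hratio : Tendsto (fun n => (a n : ℝ) ^ 2 / (a (n + 1) : ℝ)) atTop (nhds 1))
    (hsum : Summable (fun n => 1 / (a n : ℝ))) :
    ∃ N : ℕ,
      (∀ n, (a (N + n) : ℤ) =
        round (((∑' m, 1 / (a (N + m) : ℝ)) - ∑ k ∈ Finset.range n, 1 / (a (N + k) : ℝ))⁻¹ + 1))
      ∧ Tendsto (fun n =>
          ((∑' m, 1 / (a (N + m) : ℝ)) - ∑ k ∈ Finset.range n, 1 / (a (N + k) : ℝ))⁻¹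
            + 1 - (a (N + n) : ℝ)) atTop (nhds 0) := by
  have hgap := tendsto_inv_tsum_add_one_sub hratio hsum
  obtain ⟨N, hN⟩ := eventually_atTop.1 (hgap.eventually (Metric.ball_mem_nhds 0 one_half_pos))
  have hremainder : ∀ n, (∑' m, 1 / (a (N + m) : ℝ)) - ∑ k ∈ range n, 1 / (a (N + k) : ℝ)
      = ∑' k, 1 / (a (N + n + k) : ℝ) := fun n => by
    rw [tsum_sub_sum_range (hsum.nat_add_left N)]
    simp only [add_assoc]
  refine ⟨N, fun n => ?_, ?_⟩
  · rw [hremainder, eq_comm]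
    refine round_eq_of_abs_sub_lt_half ?_
    simpa only [Metric.mem_ball, dist_zero_right, Real.norm_eq_abs, Int.cast_natCast]
      using hN (N + n) (by omega)
  · simp only [hremainder]
    exact (hgap.comp (tendsto_add_atTop_nat N)).congr fun n => by
      simp only [Function.comp_apply, add_comm]

theorem eventually_pseudo_greedy
    (a : ℕ → ℕ) (hpos : ∀ n, 0 < a n)
    (hratio : Tendsto (fun n => (a n : ℝ) ^ 2 / (a (n + 1) : ℝ)) atTop (nhds 1))
    (hsum : Summable (fun n => 1 / (a n : ℝ))) :
    ∃ N : ℕ,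
      (∀ n, (a (N + n) : ℤ) =
        round (((∑' m, 1 / (a (N + m) : ℝ)) - ∑ k ∈ Finset.range n, 1 / (a (N + k) : ℝ))⁻¹ + 1))
      ∧ Tendsto (fun n =>
          ((∑' m, 1 / (a (N + m) : ℝ)) - ∑ k ∈ Finset.range n, 1 / (a (N + k) : ℝ))⁻¹
            + 1 - (a (N + n) : ℝ)) atTop (nhds 0) :=
  eventually_pseudo_greedy_general a hratio hsum
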